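/- If m is a 1-bounded hemimetric on a set Ω and μ, ν, η are finitely supported probability distributions on Ω, then the Wasserstein lifting W(m) over finitely supported distributions satisfies the triangle inequality: W(m)(μ,ν) ≤ W(m)(μ,η) + W(m)(η,ν). -/

import Mathlib

open scoped Classical

/-- A finitely supported probability distribution, as a finitely supported
nonnegative real-valued function summing to 1. -/
def IsFinDist {Ω : Type*} (μ : Ω →₀ ℝ) : Prop :=
  (∀ a, 0 ≤ μ a) ∧ μ.sum (fun _ r => r) = 1

/-- `w` is a (finitely supported) coupling of `μ` and `ν`. -/
def IsFinCoupling {Ω : Type*} (w : (Ω × Ω) →₀ ℝ) (μ ν : Ω →₀ ℝ) : Prop :=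
  IsFinDist w ∧
  (∀ a, (w.sum fun p r => if p.1 = a then r else 0) = μ a) ∧
  (∀ b, (w.sum fun p r => if p.2 = b then r else 0) = ν b)

/-- The Wasserstein lifting over finitely supported distributions. -/
noncomputable def finWasserstein {Ω : Type*} (m : Ω → Ω → ℝ) (μ ν : Ω →₀ ℝ) : ℝ :=
  sInf {r : ℝ | ∃ w : (Ω × Ω) →₀ ℝ, IsFinCoupling w μ ν ∧
    r = w.sum fun p q => q * m p.1 p.2}

/-!
Glue a coupling `w₁` of `(μ, η)` and a coupling `w₂` of `(η, ν)` along `η`: the triple weight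
`w₁(a,b) w₂(b,c) / η(b)` has `(a,b)`-marginal `w₁` and `(b,c)`-marginal `w₂`, so its
`(a,c)`-marginal couples `μ` with `ν`, and the triangle inequality `m a c ≤ m a b + m b c` bounds
its cost by the sum of the two costs. Taking infima over `w₁` and `w₂` gives the result.
-/

open Finset

section Coupling

variable {Ω : Type*}

noncomputable def transportCost (m : Ω → Ω → ℝ) (w : (Ω × Ω) →₀ ℝ) : ℝ :=
  w.sum fun p q => q * m p.1 p.2

namespace Finsupp

theorem exists_support_subset_product {M : Type*} [Zero M] (w₁ w₂ : (Ω × Ω) →₀ M) :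
    ∃ s : Finset Ω, w₁.support ⊆ s ×ˢ s ∧ w₂.support ⊆ s ×ˢ s := by
  set t := w₁.support ∪ w₂.support
  have ht : t ⊆ (t.image Prod.fst ∪ t.image Prod.snd) ×ˢ (t.image Prod.fst ∪ t.image Prod.snd) :=
    subset_product.trans (product_subset_product subset_union_left subset_union_right)
  exact ⟨_, subset_union_left.trans ht, subset_union_right.trans ht⟩

theorem apply_le_sum_ite {α β M : Type*} [AddCommMonoid M] [PartialOrder M]
    [IsOrderedAddMonoid M] {w : α →₀ M} (hw : ∀ a, 0 ≤ w a) (f : α → β) (a : α) :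
    w a ≤ w.sum fun x r => if f x = f a then r else 0 := by
  rw [w.sum_of_support_subset (subset_insert a w.support)
    (fun x r => if f x = f a then r else 0) fun _ _ => ite_self 0]
  have hle := Finset.single_le_sum (f := fun x => if f x = f a then w x else 0)
    (fun x _ => by split_ifs; exacts [hw x, le_rfl]) (mem_insert_self a w.support)
  rwa [if_pos rfl] at hle

variable {M : Type*} [AddCommMonoid M] {w : (Ω × Ω) →₀ M} {s : Finset Ω}

theorem sum_eq_sum_sum_of_support_subset {N : Type*} [AddCommMonoid N]
    (hs : w.support ⊆ s ×ˢ s) (g : Ω × Ω → M → N) (hg : ∀ p, g p 0 = 0) :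
    w.sum g = ∑ a ∈ s, ∑ b ∈ s, g (a, b) (w (a, b)) := by
  rw [w.sum_of_support_subset hs g fun p _ => hg p, sum_product]

theorem apply_eq_zero_of_notMem_product (hs : w.support ⊆ s ×ˢ s) {p : Ω × Ω}
    (hp : p ∉ s ×ˢ s) : w p = 0 :=
  notMem_support_iff.1 fun h => hp (hs h)

theorem sum_ite_fst_eq (hs : w.support ⊆ s ×ˢ s) (a : Ω) :
    (w.sum fun p r => if p.1 = a then r else 0) = ∑ b ∈ s, w (a, b) := by
  rw [w.sum_eq_sum_sum_of_support_subset hs (fun p r => if p.1 = a then r else 0)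
    fun _ => ite_self 0]
  simp only
  rw [Finset.sum_comm]
  simp only [Finset.sum_ite_eq']
  by_cases ha : a ∈ s
  · simp only [ha, if_true]
  · simp only [ha, if_false, Finset.sum_const_zero]
    exact (Finset.sum_eq_zero fun b _ =>
      w.apply_eq_zero_of_notMem_product hs fun h => ha (mem_product.1 h).1).symm

theorem sum_ite_snd_eq (hs : w.support ⊆ s ×ˢ s) (b : Ω) :
    (w.sum fun p r => if p.2 = b then r else 0) = ∑ a ∈ s, w (a, b) := by
  rw [w.sum_eq_sum_sum_of_support_subset hs (fun p r => if p.2 = b then r else 0)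
    fun _ => ite_self 0]
  simp only [Finset.sum_ite_eq']
  by_cases hb : b ∈ s
  · simp only [hb, if_true]
  · simp only [hb, if_false, Finset.sum_const_zero]
    exact (Finset.sum_eq_zero fun a _ =>
      w.apply_eq_zero_of_notMem_product hs fun h => hb (mem_product.1 h).2).symm

end Finsupp

section FiniteSums

variable {w : (Ω × Ω) →₀ ℝ} {s : Finset Ω}

theorem isFinCoupling_iff_of_support_subset {μ ν : Ω →₀ ℝ} (hs : w.support ⊆ s ×ˢ s) :
    IsFinCoupling w μ ν ↔ (∀ p, 0 ≤ w p) ∧ ∑ a ∈ s, ∑ b ∈ s, w (a, b) = 1 ∧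
      (∀ a, ∑ b ∈ s, w (a, b) = μ a) ∧ ∀ b, ∑ a ∈ s, w (a, b) = ν b := by
  simp only [IsFinCoupling, IsFinDist,
    w.sum_eq_sum_sum_of_support_subset hs (fun _ r => r) fun _ => rfl,
    w.sum_ite_fst_eq hs, w.sum_ite_snd_eq hs, and_assoc]

theorem transportCost_eq_sum_sum (m : Ω → Ω → ℝ) (hs : w.support ⊆ s ×ˢ s) :
    transportCost m w = ∑ a ∈ s, ∑ b ∈ s, w (a, b) * m a b :=
  w.sum_eq_sum_sum_of_support_subset hs _ fun _ => zero_mul _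

end FiniteSums

theorem IsFinDist.sum_eq_one {μ : Ω →₀ ℝ} (hμ : IsFinDist μ) {s : Finset Ω}
    (hs : μ.support ⊆ s) : ∑ a ∈ s, μ a = 1 := by
  rw [← hμ.2, μ.sum_of_support_subset hs _ fun _ _ => rfl]

theorem exists_isFinCoupling {μ ν : Ω →₀ ℝ} (hμ : IsFinDist μ) (hν : IsFinDist ν) :
    ∃ w, IsFinCoupling w μ ν := by
  set s := μ.support ∪ ν.support
  have hsupp (p : Ω × Ω) (hp : μ p.1 * ν p.2 ≠ 0) : p ∈ s ×ˢ s :=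
    mem_product.2 ⟨mem_union_left _ (Finsupp.mem_support_iff.2 (left_ne_zero_of_mul hp)),
      mem_union_right _ (Finsupp.mem_support_iff.2 (right_ne_zero_of_mul hp))⟩
  have hμ1 := hμ.sum_eq_one (s := s) subset_union_left
  have hν1 := hν.sum_eq_one (s := s) subset_union_right
  refine ⟨Finsupp.onFinset _ _ hsupp,
    (isFinCoupling_iff_of_support_subset Finsupp.support_onFinset_subset).2
    ⟨fun p => ?_, ?_, fun a => ?_, fun b => ?_⟩⟩ <;> simp only [Finsupp.onFinset_apply]
  · exact mul_nonneg (hμ.1 _) (hν.1 _)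
  · rw [← sum_mul_sum, hμ1, hν1, one_mul]
  · rw [← mul_sum, hν1, mul_one]
  · rw [← sum_mul, hμ1, one_mul]

section Gluing

variable {w₁ w₂ : (Ω × Ω) →₀ ℝ} {μ ν η : Ω →₀ ℝ}

theorem IsFinCoupling.apply_le_fst {w : (Ω × Ω) →₀ ℝ} (hw : IsFinCoupling w μ ν) (p : Ω × Ω) :
    w p ≤ μ p.1 :=
  hw.2.1 p.1 ▸ Finsupp.apply_le_sum_ite hw.1.1 Prod.fst p

theorem IsFinCoupling.apply_le_snd {w : (Ω × Ω) →₀ ℝ} (hw : IsFinCoupling w μ ν) (p : Ω × Ω) :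
    w p ≤ ν p.2 :=
  hw.2.2 p.2 ▸ Finsupp.apply_le_sum_ite hw.1.1 Prod.snd p

-- At `η b = 0` the division returns `0`; this is harmless since then `w₁ (a, b) = w₂ (b, c) = 0`.
noncomputable def gluingWeight (w₁ w₂ : (Ω × Ω) →₀ ℝ) (η : Ω →₀ ℝ) (a b c : Ω) : ℝ :=
  w₁ (a, b) * w₂ (b, c) / η b

theorem gluingWeight_nonneg (hw₁ : IsFinCoupling w₁ μ η) (hw₂ : IsFinCoupling w₂ η ν)
    (a b c : Ω) : 0 ≤ gluingWeight w₁ w₂ η a b c :=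
  div_nonneg (mul_nonneg (hw₁.1.1 _) (hw₂.1.1 _)) ((hw₂.1.1 _).trans (hw₂.apply_le_fst (b, c)))

theorem sum_gluingWeight_right {s : Finset Ω} (hw₁ : IsFinCoupling w₁ μ η)
    (hw₂ : IsFinCoupling w₂ η ν) (hs₂ : w₂.support ⊆ s ×ˢ s) (a b : Ω) :
    ∑ c ∈ s, gluingWeight w₁ w₂ η a b c = w₁ (a, b) := by
  have hη : η b = 0 → w₁ (a, b) = 0 := fun h =>
    le_antisymm (h ▸ hw₁.apply_le_snd (a, b)) (hw₁.1.1 _)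
  simp only [gluingWeight, mul_div_right_comm, ← mul_sum]
  rw [((isFinCoupling_iff_of_support_subset hs₂).1 hw₂).2.2.1 b, div_mul_cancel_of_imp hη]

theorem sum_gluingWeight_left {s : Finset Ω} (hw₁ : IsFinCoupling w₁ μ η)
    (hw₂ : IsFinCoupling w₂ η ν) (hs₁ : w₁.support ⊆ s ×ˢ s) (b c : Ω) :
    ∑ a ∈ s, gluingWeight w₁ w₂ η a b c = w₂ (b, c) := by
  have hη : η b = 0 → w₂ (b, c) = 0 := fun h =>
    le_antisymm (h ▸ hw₂.apply_le_fst (b, c)) (hw₂.1.1 _)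
  simp only [gluingWeight, mul_div_assoc, ← sum_mul]
  rw [((isFinCoupling_iff_of_support_subset hs₁).1 hw₁).2.2.2 b, mul_div_cancel_of_imp' hη]

noncomputable def gluedCoupling (s : Finset Ω) (w₁ w₂ : (Ω × Ω) →₀ ℝ) (η : Ω →₀ ℝ) :
    (Ω × Ω) →₀ ℝ :=
  Finsupp.onFinset (w₁.support.image Prod.fst ×ˢ w₂.support.image Prod.snd)
    (fun p => ∑ b ∈ s, gluingWeight w₁ w₂ η p.1 b p.2) fun p hp => by
      obtain ⟨b, -, hb⟩ := exists_ne_zero_of_sum_ne_zero hp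
      obtain ⟨h₁, -⟩ := div_ne_zero_iff.1 hb
      exact mem_product.2
        ⟨mem_image.2 ⟨(p.1, b), Finsupp.mem_support_iff.2 (left_ne_zero_of_mul h₁), rfl⟩,
          mem_image.2 ⟨(b, p.2), Finsupp.mem_support_iff.2 (right_ne_zero_of_mul h₁), rfl⟩⟩

theorem gluedCoupling_apply (s : Finset Ω) (a c : Ω) :
    gluedCoupling s w₁ w₂ η (a, c) = ∑ b ∈ s, gluingWeight w₁ w₂ η a b c :=
  Finsupp.onFinset_apply

theorem support_gluedCoupling_subset {s : Finset Ω} (hs₁ : w₁.support ⊆ s ×ˢ s)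
    (hs₂ : w₂.support ⊆ s ×ˢ s) : (gluedCoupling s w₁ w₂ η).support ⊆ s ×ˢ s :=
  Finsupp.support_onFinset_subset.trans <| product_subset_product
    (image_subset_iff.2 fun _ hp => (mem_product.1 (hs₁ hp)).1)
    (image_subset_iff.2 fun _ hp => (mem_product.1 (hs₂ hp)).2)

theorem isFinCoupling_gluedCoupling {s : Finset Ω} (hw₁ : IsFinCoupling w₁ μ η)
    (hw₂ : IsFinCoupling w₂ η ν) (hs₁ : w₁.support ⊆ s ×ˢ s) (hs₂ : w₂.support ⊆ s ×ˢ s) :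
    IsFinCoupling (gluedCoupling s w₁ w₂ η) μ ν := by
  obtain ⟨-, hmass₁, hfst₁, -⟩ := (isFinCoupling_iff_of_support_subset hs₁).1 hw₁
  obtain ⟨-, -, -, hsnd₂⟩ := (isFinCoupling_iff_of_support_subset hs₂).1 hw₂
  have hfst (a : Ω) : ∑ c ∈ s, gluedCoupling s w₁ w₂ η (a, c) = ∑ b ∈ s, w₁ (a, b) := by
    simp only [gluedCoupling_apply]
    rw [sum_comm]
    exact sum_congr rfl fun b _ => sum_gluingWeight_right hw₁ hw₂ hs₂ a b
  refine (isFinCoupling_iff_of_support_subset (support_gluedCoupling_subset hs₁ hs₂)).2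
    ⟨fun ⟨a, c⟩ => ?_, ?_, fun a => (hfst a).trans (hfst₁ a), fun c => ?_⟩
  · rw [gluedCoupling_apply]
    exact sum_nonneg fun b _ => gluingWeight_nonneg hw₁ hw₂ a b c
  · rw [← hmass₁]
    exact sum_congr rfl fun a _ => hfst a
  · simp only [gluedCoupling_apply]
    rw [sum_comm, ← hsnd₂]
    exact sum_congr rfl fun b _ => sum_gluingWeight_left hw₁ hw₂ hs₁ b c

theorem transportCost_gluedCoupling_le {m : Ω → Ω → ℝ} (htri : ∀ a b c, m a b ≤ m a c + m c b)
    {s : Finset Ω} (hw₁ : IsFinCoupling w₁ μ η) (hw₂ : IsFinCoupling w₂ η ν)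
    (hs₁ : w₁.support ⊆ s ×ˢ s) (hs₂ : w₂.support ⊆ s ×ˢ s) :
    transportCost m (gluedCoupling s w₁ w₂ η) ≤ transportCost m w₁ + transportCost m w₂ := by
  set k := gluingWeight w₁ w₂ η
  have hcost₁ : ∑ a ∈ s, ∑ c ∈ s, ∑ b ∈ s, k a b c * m a b = transportCost m w₁ := by
    rw [transportCost_eq_sum_sum m hs₁]
    refine sum_congr rfl fun a _ => ?_
    rw [sum_comm]
    exact sum_congr rfl fun b _ => by rw [← sum_mul, sum_gluingWeight_right hw₁ hw₂ hs₂]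
  have hcost₂ : ∑ a ∈ s, ∑ c ∈ s, ∑ b ∈ s, k a b c * m b c = transportCost m w₂ := by
    rw [transportCost_eq_sum_sum m hs₂, sum_comm, sum_congr rfl fun c _ => sum_comm, sum_comm]
    exact sum_congr rfl fun b _ => sum_congr rfl fun c _ => by
      rw [← sum_mul, sum_gluingWeight_left hw₁ hw₂ hs₁]
  calc transportCost m (gluedCoupling s w₁ w₂ η)
      = ∑ a ∈ s, ∑ c ∈ s, ∑ b ∈ s, k a b c * m a c := by
        rw [transportCost_eq_sum_sum m (support_gluedCoupling_subset hs₁ hs₂)]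
        simp only [gluedCoupling_apply, sum_mul, k]
    _ ≤ ∑ a ∈ s, ∑ c ∈ s, ∑ b ∈ s, (k a b c * m a b + k a b c * m b c) := by
        gcongr with a _ c _ b _
        rw [← mul_add]
        exact mul_le_mul_of_nonneg_left (htri a c b) (gluingWeight_nonneg hw₁ hw₂ a b c)
    _ = transportCost m w₁ + transportCost m w₂ := by
        simp only [sum_add_distrib, hcost₁, hcost₂]

theorem exists_isFinCoupling_transportCost_le {m : Ω → Ω → ℝ}
    (htri : ∀ a b c, m a b ≤ m a c + m c b) (hw₁ : IsFinCoupling w₁ μ η)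
    (hw₂ : IsFinCoupling w₂ η ν) :
    ∃ w, IsFinCoupling w μ ν ∧ transportCost m w ≤ transportCost m w₁ + transportCost m w₂ := by
  obtain ⟨s, hs₁, hs₂⟩ := Finsupp.exists_support_subset_product w₁ w₂
  exact ⟨gluedCoupling s w₁ w₂ η, isFinCoupling_gluedCoupling hw₁ hw₂ hs₁ hs₂,
    transportCost_gluedCoupling_le htri hw₁ hw₂ hs₁ hs₂⟩

end Gluing

section Infimum

variable {m : Ω → Ω → ℝ} {μ ν : Ω →₀ ℝ}

theorem transportCost_nonneg (hm0 : ∀ a b, 0 ≤ m a b) {w : (Ω × Ω) →₀ ℝ}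
    (hw : ∀ p, 0 ≤ w p) : 0 ≤ transportCost m w :=
  Finsupp.sum_nonneg' fun p => mul_nonneg (hw p) (hm0 p.1 p.2)

theorem finWasserstein_le (hm0 : ∀ a b, 0 ≤ m a b) {w : (Ω × Ω) →₀ ℝ}
    (hw : IsFinCoupling w μ ν) : finWasserstein m μ ν ≤ transportCost m w :=
  csInf_le ⟨0, by rintro _ ⟨w', hw', rfl⟩; exact transportCost_nonneg hm0 hw'.1.1⟩ ⟨w, hw, rfl⟩

theorem le_finWasserstein (hμ : IsFinDist μ) (hν : IsFinDist ν) {r : ℝ}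
    (h : ∀ w, IsFinCoupling w μ ν → r ≤ transportCost m w) : r ≤ finWasserstein m μ ν := by
  obtain ⟨w, hw⟩ := exists_isFinCoupling hμ hν
  exact le_csInf ⟨_, w, hw, rfl⟩ fun _ ⟨w', hw', hr⟩ => hr ▸ h w' hw'

end Infimum

end Coupling

theorem finWasserstein_triangle_general {Ω : Type*}
    (m : Ω → Ω → ℝ)
    (hm0 : ∀ a b, 0 ≤ m a b)
    (htri : ∀ a b c, m a b ≤ m a c + m c b)
    (μ ν η : Ω →₀ ℝ) (hμ : IsFinDist μ) (hν : IsFinDist ν) (hη : IsFinDist η) :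
    finWasserstein m μ ν ≤ finWasserstein m μ η + finWasserstein m η ν := by
  suffices finWasserstein m μ ν - finWasserstein m η ν ≤ finWasserstein m μ η by linarith
  refine le_finWasserstein hμ hη fun w₁ hw₁ => ?_
  suffices finWasserstein m μ ν - transportCost m w₁ ≤ finWasserstein m η ν by linarith
  refine le_finWasserstein hη hν fun w₂ hw₂ => ?_
  obtain ⟨w, hw, hcost⟩ := exists_isFinCoupling_transportCost_le htri hw₁ hw₂
  linarith [finWasserstein_le hm0 hw]

theorem finWasserstein_triangle {Ω : Type*} [Nonempty Ω]
    (m : Ω → Ω → ℝ)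
    (hm0 : ∀ a b, 0 ≤ m a b) (hm1 : ∀ a b, m a b ≤ 1)
    (hrefl : ∀ a, m a a = 0)
    (htri : ∀ a b c, m a b ≤ m a c + m c b)
    (μ ν η : Ω →₀ ℝ) (hμ : IsFinDist μ) (hν : IsFinDist ν) (hη : IsFinDist η) :
    finWasserstein m μ ν ≤ finWasserstein m μ η + finWasserstein m η ν :=
  finWasserstein_triangle_general m hm0 htri μ ν η hμ hν hη
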